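/- If S : F → ℝ is a smooth function on a smooth manifold F, Π : F → N a smooth map to a manifold N, α a 1-form on N, and EL a 1-form on F such that dS = EL + Π*α, then at every point x where EL vanishes, (Π* dα)ₓ = -(d EL)ₓ evaluated appropriately; in particular, if EL vanishes on a submanifold C ⊆ F and Π is a submersion on C whose image is a submanifold, then dα vanishes when pulled back to Π(C). -/

import Mathlib

/-- Exterior differential of a 1-form `α` (a smooth map into the dual), evaluated on two
tangent vectors: `dα_y(u,v) = (D_u α)(v) − (D_v α)(u)`. -/
noncomputable def oneFormD {N : Type*} [NormedAddCommGroup N] [NormedSpace ℝ N]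
    (α : N → (N →L[ℝ] ℝ)) (y : N) (u v : N) : ℝ :=
  fderiv ℝ α y u v - fderiv ℝ α y v u

/-- If `dS = EL + Π*α` on a space of fields `F`, `C` is a set on which the
Euler–Lagrange form `EL` vanishes and on which `Π` is a submersion, then the pullback of
`dα` to `Π(C)` vanishes: for any smooth surface `σ` contained in `C`, `dα` at `Π(σ s)`
annihilates the pair of tangent directions of `Π ∘ σ`. -/
theorem stmt_2 {F N : Type*} [NormedAddCommGroup F] [NormedSpace ℝ F]
    [NormedAddCommGroup N] [NormedSpace ℝ N]
    (S : F → ℝ) (hS : ContDiff ℝ (⊤ : ℕ∞) S)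
    (Pi' : F → N) (hPi : ContDiff ℝ (⊤ : ℕ∞) Pi')
    (α : N → (N →L[ℝ] ℝ)) (hα : ContDiff ℝ (⊤ : ℕ∞) α)
    (EL : F → (F →L[ℝ] ℝ))
    (hEL : ∀ x, fderiv ℝ S x = EL x + (α (Pi' x)).comp (fderiv ℝ Pi' x))
    (C : Set F)
    (hCzero : ∀ x ∈ C, EL x = 0)
    (hsubmersion : ∀ x ∈ C, Function.Surjective (fderiv ℝ Pi' x)) :
    ∀ σ : ℝ × ℝ → F, ContDiff ℝ (⊤ : ℕ∞) σ → (∀ s, σ s ∈ C) →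
      ∀ s : ℝ × ℝ,
        oneFormD α (Pi' (σ s))
          (fderiv ℝ (fun t => Pi' (σ t)) s (1, 0))
          (fderiv ℝ (fun t => Pi' (σ t)) s (0, 1)) = 0 := by
  intro σ hσ hσC s₀
  set φ : ℝ × ℝ → N := fun t => Pi' (σ t) with hφdef
  have hφ : ContDiff ℝ (⊤ : ℕ∞) φ := hPi.comp hσ
  have hSσ : ContDiff ℝ (⊤ : ℕ∞) (fun t => S (σ t)) := hS.comp hσ
  -- the first derivative of S ∘ σ equals (α ∘ φ) composed with dφ everywhere
  have hg : (fderiv ℝ (fun t => S (σ t))) =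
      fun s => (α (φ s)).comp (fderiv ℝ φ s) := by
    funext s
    have h1 : fderiv ℝ (fun t => S (σ t)) s
        = (fderiv ℝ S (σ s)).comp (fderiv ℝ σ s) := by
      exact fderiv_comp s (hS.differentiable (by simp) (σ s)) (hσ.differentiable (by simp) s)
    have h2 : fderiv ℝ φ s = (fderiv ℝ Pi' (σ s)).comp (fderiv ℝ σ s) := by
      exact fderiv_comp s (hPi.differentiable (by simp) (σ s)) (hσ.differentiable (by simp) s)
    rw [h1, hEL (σ s), hCzero (σ s) (hσC s), h2]
    simp [hφdef, ContinuousLinearMap.comp_assoc]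
  -- symmetry of second derivative of S ∘ σ
  have hsymS : IsSymmSndFDerivAt ℝ (fun t => S (σ t)) s₀ :=
    hSσ.contDiffAt.isSymmSndFDerivAt (by rw [minSmoothness_of_isRCLikeNormedField]; exact WithTop.coe_le_coe.mpr le_top)
  have hsymφ : IsSymmSndFDerivAt ℝ φ s₀ :=
    hφ.contDiffAt.isSymmSndFDerivAt (by rw [minSmoothness_of_isRCLikeNormedField]; exact WithTop.coe_le_coe.mpr le_top)
  -- derivative of s ↦ (α (φ s)).comp (fderiv φ s)
  have hαφ : HasFDerivAt (fun s => α (φ s))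
      ((fderiv ℝ α (φ s₀)).comp (fderiv ℝ φ s₀)) s₀ := by
    have := (hα.differentiable (by simp) (φ s₀)).hasFDerivAt.comp s₀
      (hφ.differentiable (by simp) s₀).hasFDerivAt
    exact this
  have hdφ : HasFDerivAt (fun s => fderiv ℝ φ s) (fderiv ℝ (fderiv ℝ φ) s₀) s₀ := by
    have h := (hφ.fderiv_right (m := 1) (WithTop.coe_le_coe.mpr le_top)).differentiable (by simp) s₀
    exact h.hasFDerivAt
  have hprod := hαφ.clm_comp hdφ
  have hfd : fderiv ℝ (fun s => (α (φ s)).comp (fderiv ℝ φ s)) s₀ =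
      ((ContinuousLinearMap.compL ℝ (ℝ × ℝ) N ℝ (α (φ s₀))).comp
        (fderiv ℝ (fderiv ℝ φ) s₀) +
      ((ContinuousLinearMap.compL ℝ (ℝ × ℝ) N ℝ).flip (fderiv ℝ φ s₀)).comp
        ((fderiv ℝ α (φ s₀)).comp (fderiv ℝ φ s₀))) := hprod.fderiv
  have key := hsymS.eq (1, 0) (0, 1)
  rw [hg, hfd] at key
  simp only [ContinuousLinearMap.add_apply, ContinuousLinearMap.comp_apply,
    ContinuousLinearMap.compL_apply, ContinuousLinearMap.flip_apply,
    ContinuousLinearMap.coe_comp', Function.comp_apply] at key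
  have hsym2 := hsymφ.eq (1, 0) (0, 1)
  simp only [oneFormD, hφdef]
  have : α (φ s₀) (fderiv ℝ (fderiv ℝ φ) s₀ (1, 0) (0, 1)) =
      α (φ s₀) (fderiv ℝ (fderiv ℝ φ) s₀ (0, 1) (1, 0)) := by rw [hsym2]
  simp only [hφdef] at key this ⊢
  linarith
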